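/- arXiv:1007.4896 — 2 statements merged into one kernel-verified Lean document; each statement's English description precedes it below -/
import Mathlib

section
/- The pairing ⟨·,·⟩ on the omni-Lie 2-algebra gl(𝕍) ⊕ 𝕍 is a bilinear functor into 𝕍: for all morphisms e₁ = (A,φ,u,m), e₂ = (B,ψ,v,n) ∈ E, one has s⟨e₁,e₂⟩ = ⟨s(e₁), s(e₂)⟩ = ½(A₀v + B₀u) and t⟨e₁,e₂⟩ = ⟨t(e₁), t(e₂)⟩, where t(A,φ,u,m) = (A+δφ, u+dm); it sends pairs of identity morphisms to identity morphisms; and for composable pairs (t(e₁) = s(e₁′), t(e₂) = s(e₂′)) the morphisms ⟨e₁,e₂⟩ and ⟨e₁′,e₂′⟩ of 𝕍 are composable and ⟨e₁·e₁′, e₂·e₂′⟩ = ⟨e₁,e₂⟩·⟨e₁′,e₂′⟩, where e·e′ = (A, φ+φ′, u, m+m′) is vertical composition in gl(𝕍) ⊕ 𝕍. -/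
open LinearMap

noncomputable section

namespace Omni

variable {V₀ V₁ : Type*}
  [AddCommGroup V₀] [Module ℝ V₀] [AddCommGroup V₁] [Module ℝ V₁]

variable (d : V₁ →ₗ[ℝ] V₀)

/-- `End⁰`: pairs `(A₀, A₁)` of endomorphisms with `A₀ ∘ d = d ∘ A₁`. -/
def End0 : Submodule ℝ ((V₀ →ₗ[ℝ] V₀) × (V₁ →ₗ[ℝ] V₁)) where
  carrier := {A | A.1 ∘ₗ d = d ∘ₗ A.2}
  add_mem' := by
    intro a b ha hb
    simp only [Set.mem_setOf_eq] at *
    simp [add_comp, comp_add, ha, hb]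
  zero_mem' := by
    simp only [Set.mem_setOf_eq]
    simp
  smul_mem' := by
    intro c a ha
    simp only [Set.mem_setOf_eq] at *
    simp [smul_comp, comp_smul, ha]

lemma mem_End0 {A : (V₀ →ₗ[ℝ] V₀) × (V₁ →ₗ[ℝ] V₁)} :
    A ∈ End0 d ↔ A.1 ∘ₗ d = d ∘ₗ A.2 := Iff.rfl

/-- Morphism space of `gl(𝕍)`:  `End⁰ ⊕ End¹`. -/
abbrev Gl := ↥(End0 d) × (V₀ →ₗ[ℝ] V₁)

/-- Morphism space of the omni-Lie 2-algebra `gl(𝕍) ⊕ 𝕍`. -/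
abbrev E := Gl d × (V₀ × V₁)

/-- `δ : End¹ → End⁰`, `δφ = (d∘φ, φ∘d)`. -/
def δm (φ : V₀ →ₗ[ℝ] V₁) : End0 d :=
  ⟨(d ∘ₗ φ, φ ∘ₗ d), by
    rw [mem_End0]
    exact (comp_assoc _ _ _).symm⟩

/-- commutator bracket on `End⁰`. -/
def bkt0 (A B : End0 d) : End0 d :=
  ⟨(A.1.1 ∘ₗ B.1.1 - B.1.1 ∘ₗ A.1.1, A.1.2 ∘ₗ B.1.2 - B.1.2 ∘ₗ A.1.2), by
    have hA : A.1.1 ∘ₗ d = d ∘ₗ A.1.2 := A.2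
    have hB : B.1.1 ∘ₗ d = d ∘ₗ B.1.2 := B.2
    rw [mem_End0]
    have ha : ∀ x, A.1.1 (d x) = d (A.1.2 x) := fun x => LinearMap.congr_fun hA x
    have hb : ∀ x, B.1.1 (d x) = d (B.1.2 x) := fun x => LinearMap.congr_fun hB x
    ext m
    simp [ha, hb]⟩

/-- `[A,φ] = A₁ ∘ φ - φ ∘ A₀` for `A ∈ End⁰`, `φ ∈ End¹`. -/
def bktAφ (A : End0 d) (φ : V₀ →ₗ[ℝ] V₁) : V₀ →ₗ[ℝ] V₁ :=
  A.1.2 ∘ₗ φ - φ ∘ₗ A.1.1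

/-- `[φ,ψ]_δ = φ∘d∘ψ - ψ∘d∘φ`. -/
def bktδ (φ ψ : V₀ →ₗ[ℝ] V₁) : V₀ →ₗ[ℝ] V₁ :=
  φ ∘ₗ d ∘ₗ ψ - ψ ∘ₗ d ∘ₗ φ

/-- bracket on the morphism space `End⁰ ⊕ End¹` of `gl(𝕍)`. -/
def bkt (X Y : Gl d) : Gl d :=
  (bkt0 d X.1 Y.1, bktAφ d X.1 Y.2 - bktAφ d Y.1 X.2 + bktδ d X.2 Y.2)

/-- action of `gl(𝕍)` on `𝕍`:  `(A,φ)·(u,m) = (A₀u, A₁m + φ(u+dm))`. -/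
def act (X : Gl d) (ξ : V₀ × V₁) : V₀ × V₁ :=
  (X.1.1.1 ξ.1, X.1.1.2 ξ.2 + X.2 (ξ.1 + d ξ.2))

/-- the `𝕍`-valued pairing on `E`. -/
def pairE (e₁ e₂ : E d) : V₀ × V₁ :=
  (2⁻¹ : ℝ) • (act d e₁.1 e₂.2 + act d e₂.1 e₁.2)

/-- pairing at the level of objects. -/
def pairObj (x y : (End0 d) × V₀) : V₀ :=
  (2⁻¹ : ℝ) • (x.1.1.1 y.2 + y.1.1.1 x.2)

/-- the Courant bracket on `E`. -/
def courant (e₁ e₂ : E d) : E d :=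
  (bkt d e₁.1 e₂.1, (2⁻¹ : ℝ) • (act d e₁.1 e₂.2 - act d e₂.1 e₁.2))

/-- Courant bracket at the level of objects. -/
def courantObj (x y : (End0 d) × V₀) : (End0 d) × V₀ :=
  (bkt0 d x.1 y.1, (2⁻¹ : ℝ) • (x.1.1.1 y.2 - y.1.1.1 x.2))

/-- the Dorfman bracket on `E`. -/
def dorfman (e₁ e₂ : E d) : E d :=
  (bkt d e₁.1 e₂.1, act d e₁.1 e₂.2)

/-- source of a morphism of `gl(𝕍) ⊕ 𝕍`. -/
def sE (e : E d) : (End0 d) × V₀ := (e.1.1, e.2.1)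

/-- target of a morphism of `gl(𝕍) ⊕ 𝕍`. -/
def tE (e : E d) : (End0 d) × V₀ := (e.1.1 + δm d e.1.2, e.2.1 + d e.2.2)

/-- vertical composition of morphisms of `gl(𝕍) ⊕ 𝕍`. -/
def compE (e e' : E d) : E d := ((e.1.1, e.1.2 + e'.1.2), (e.2.1, e.2.2 + e'.2.2))

/-- vertical composition of morphisms of `𝕍`. -/
def compV (x y : V₀ × V₁) : V₀ × V₁ := (x.1, x.2 + y.2)

/-- orthogonal complement w.r.t. the `𝕍`-valued pairing. -/
def perp (L : Set (E d)) : Set (E d) := {e | ∀ l ∈ L, pairE d e l = 0}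

/-- bilinear functor data `(F₀, F_a, F_b)` for `𝕍`. -/
structure BilinData where
  F0 : V₀ →ₗ[ℝ] V₀ →ₗ[ℝ] V₀
  Fa : V₀ →ₗ[ℝ] V₁ →ₗ[ℝ] V₁
  Fb : V₁ →ₗ[ℝ] V₀ →ₗ[ℝ] V₁
  ha : ∀ u n, d (Fa u n) = F0 u (d n)
  hb : ∀ m v, d (Fb m v) = F0 (d m) v
  hc : ∀ m n, Fa (d m) n = Fb m (d n)

/-- `ad_F (u,m) = ((F₀(u,·), F_a(u,·)), F_b(m,·))`. -/
def adF (F : BilinData d) (ξ : V₀ × V₁) : Gl d :=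
  (⟨(F.F0 ξ.1, F.Fa ξ.1), by
      rw [mem_End0]
      ext n
      exact (F.ha ξ.1 n).symm⟩, F.Fb ξ.2)

/-- the graph `G_F = {(ad_F ξ, ξ)}`. -/
def graphF (F : BilinData d) : Set (E d) := {e | ∃ ξ : V₀ × V₁, e = (adF d F ξ, ξ)}

/-- an isomorphism `μ = (μ₀, μ₁, μ₂)` from the Lie 2-algebra `gl(𝕍)` to itself. -/
structure GlIso where
  μ0 : (End0 d) ≃ₗ[ℝ] (End0 d)
  μ1 : (Gl d) ≃ₗ[ℝ] (Gl d)
  hs : ∀ X : Gl d, (μ1 X).1 = μ0 X.1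
  ht : ∀ X : Gl d, (μ1 X).1 + δm d (μ1 X).2 = μ0 (X.1 + δm d X.2)
  hid : ∀ A : End0 d, μ1 (A, 0) = (μ0 A, 0)
  hcomp : ∀ (A : End0 d) (φ φ' : V₀ →ₗ[ℝ] V₁),
    μ1 (A, φ + φ') = ((μ1 (A, φ)).1, (μ1 (A, φ)).2 + (μ1 (A + δm d φ, φ')).2)
  μ2 : (End0 d) →ₗ[ℝ] (End0 d) →ₗ[ℝ] Gl d
  hskew : ∀ A B, μ2 A B = - μ2 B A
  hs2 : ∀ A B, (μ2 A B).1 = μ0 (bkt0 d A B)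
  ht2 : ∀ A B, (μ2 A B).1 + δm d (μ2 A B).2 = bkt0 d (μ0 A) (μ0 B)
  hnat : ∀ (A B : End0 d) (φ ψ : V₀ →ₗ[ℝ] V₁),
    (μ2 A B).2 + (bkt d (μ1 (A, φ)) (μ1 (B, ψ))).2
      = (μ1 (bkt d (A, φ) (B, ψ))).2 + (μ2 (A + δm d φ) (B + δm d ψ)).2
  hcoh : ∀ A B C : End0 d,
    (μ2 (bkt0 d A B) C).2 + (bkt d (μ2 A B) ((μ0 C, 0) : Gl d)).2
      = (μ2 A (bkt0 d B C)).2 + (μ2 B (bkt0 d C A)).2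
        + (bkt d ((μ0 A, 0) : Gl d) (μ2 B C)).2
        + (bkt d ((μ0 B, 0) : Gl d) (μ2 C A)).2

/-- the `μ`-twisted pairing on `E`. -/
def pairμ (μ : GlIso d) (e₁ e₂ : E d) : V₀ × V₁ :=
  (2⁻¹ : ℝ) • (act d (μ.μ1 e₁.1) e₂.2 + act d (μ.μ1 e₂.1) e₁.2)

/-- the `μ`-twisted Courant bracket on `E`. -/
def courantμ (μ : GlIso d) (e₁ e₂ : E d) : E d :=
  (bkt d e₁.1 e₂.1, (2⁻¹ : ℝ) • (act d (μ.μ1 e₁.1) e₂.2 - act d (μ.μ1 e₂.1) e₁.2))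

/-- orthogonal complement w.r.t. the `μ`-twisted pairing. -/
def perpμ (μ : GlIso d) (L : Set (E d)) : Set (E d) := {e | ∀ l ∈ L, pairμ d μ e l = 0}

/-- the `μ`-twisted Dorfman bracket at the level of objects. -/
def dorfObjμ (μ : GlIso d) (x y : (End0 d) × V₀) : (End0 d) × V₀ :=
  (bkt0 d x.1 y.1, (μ.μ0 x.1).1.1 y.2)

end Omni

end

/-
The pairing is the symmetrisation `½(e₁.1 · e₂.2 + e₂.1 · e₁.2)` of the action of `gl(𝕍)` on `𝕍`.
The action is itself a functor `gl(𝕍) × 𝕍 → 𝕍` (the target identity is `A₀ ∘ d = d ∘ A₁`), and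
source, target and vertical composition of `𝕍` are linear, so the pairing inherits functoriality.
-/

namespace Omni

variable {V₀ V₁ : Type*} [AddCommGroup V₀] [AddCommGroup V₁]

lemma compV_add (x y x' y' : V₀ × V₁) :
    compV (x + y) (x' + y') = compV x x' + compV y y' := by
  ext <;> simp only [compV, Prod.fst_add, Prod.snd_add]
  abel

variable [Module ℝ V₀] [Module ℝ V₁]

lemma compV_smul (c : ℝ) (x y : V₀ × V₁) : compV (c • x) (c • y) = c • compV x y := by
  ext <;> simp only [compV, Prod.smul_fst, Prod.smul_snd, smul_add]

variable (d : V₁ →ₗ[ℝ] V₀)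

lemma fst_apply_d_eq_d_snd_apply (A : End0 d) (m : V₁) : A.1.1 (d m) = d (A.1.2 m) :=
  LinearMap.congr_fun A.2 m

lemma act_target (X : Gl d) (ξ : V₀ × V₁) :
    (act d X ξ).1 + d (act d X ξ).2 = (X.1 + δm d X.2).1.1 (ξ.1 + d ξ.2) := by
  simp only [act, δm, Submodule.coe_add, Prod.fst_add, LinearMap.add_apply, LinearMap.comp_apply,
    map_add, fst_apply_d_eq_d_snd_apply]
  abel

lemma act_id (A : End0 d) (u : V₀) : act d (A, 0) (u, 0) = (A.1.1 u, 0) := by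
  simp [act]

lemma act_comp (X X' : Gl d) (ξ ξ' : V₀ × V₁) (hX : X'.1 = X.1 + δm d X.2)
    (hξ : ξ'.1 = ξ.1 + d ξ.2) :
    act d (X.1, X.2 + X'.2) (ξ.1, ξ.2 + ξ'.2) = compV (act d X ξ) (act d X' ξ') := by
  simp only [act, compV, hX, hξ, δm, Submodule.coe_add, Prod.snd_add, LinearMap.add_apply,
    LinearMap.comp_apply, map_add]
  congr 1
  abel

lemma pairE_target (e₁ e₂ : E d) :
    (pairE d e₁ e₂).1 + d (pairE d e₁ e₂).2 = pairObj d (tE d e₁) (tE d e₂) := by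
  simp only [pairObj, tE]
  rw [← act_target, ← act_target]
  simp only [pairE, Prod.smul_fst, Prod.smul_snd, Prod.fst_add, Prod.snd_add, map_smul, map_add,
    smul_add]
  abel

lemma pairE_id (A B : End0 d) (u v : V₀) :
    pairE d ((A, 0), (u, 0)) ((B, 0), (v, 0)) = (pairObj d (A, u) (B, v), 0) := by
  simp [pairE, pairObj, act_id]

lemma pairE_compE (e₁ e₁' e₂ e₂' : E d) (h₁ : sE d e₁' = tE d e₁) (h₂ : sE d e₂' = tE d e₂) :
    pairE d (compE d e₁ e₁') (compE d e₂ e₂') = compV (pairE d e₁ e₂) (pairE d e₁' e₂') := by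
  obtain ⟨hX₁, hξ₁⟩ := Prod.ext_iff.mp h₁
  obtain ⟨hX₂, hξ₂⟩ := Prod.ext_iff.mp h₂
  rw [pairE, pairE, pairE, compV_smul, compV_add, compE, compE,
    act_comp d _ _ _ _ hX₁ hξ₂, act_comp d _ _ _ _ hX₂ hξ₁]

end Omni

open Omni in
theorem pairing_bilinear_functor_general {V₀ V₁ : Type*} [AddCommGroup V₀] [Module ℝ V₀] [AddCommGroup V₁] [Module ℝ V₁]
    (d : V₁ →ₗ[ℝ] V₀) :
    -- source: s⟨e₁,e₂⟩ = ⟨s e₁, s e₂⟩ = ½(A₀v + B₀u)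
    (∀ e₁ e₂ : E d,
      (pairE d e₁ e₂).1 = pairObj d (sE d e₁) (sE d e₂) ∧
      pairObj d (sE d e₁) (sE d e₂)
        = (2⁻¹ : ℝ) • (e₁.1.1.1.1 e₂.2.1 + e₂.1.1.1.1 e₁.2.1)) ∧
    -- target: t⟨e₁,e₂⟩ = ⟨t e₁, t e₂⟩
    (∀ e₁ e₂ : E d,
      (pairE d e₁ e₂).1 + d (pairE d e₁ e₂).2 = pairObj d (tE d e₁) (tE d e₂)) ∧
    -- identity morphisms go to identity morphisms
    (∀ (A B : End0 d) (u v : V₀),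
      pairE d ((A, 0), (u, 0)) ((B, 0), (v, 0)) = (pairObj d (A, u) (B, v), 0)) ∧
    -- vertical composition: composability and functoriality
    (∀ e₁ e₁' e₂ e₂' : E d,
      e₁'.1.1 = e₁.1.1 + δm d e₁.1.2 → e₁'.2.1 = e₁.2.1 + d e₁.2.2 →
      e₂'.1.1 = e₂.1.1 + δm d e₂.1.2 → e₂'.2.1 = e₂.2.1 + d e₂.2.2 →
      (pairE d e₁ e₂).1 + d (pairE d e₁ e₂).2 = (pairE d e₁' e₂').1 ∧
      pairE d (compE d e₁ e₁') (compE d e₂ e₂')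
        = compV (pairE d e₁ e₂) (pairE d e₁' e₂')) := by
  refine ⟨fun _ _ => ⟨rfl, rfl⟩, pairE_target d, pairE_id d, ?_⟩
  intro e₁ e₁' e₂ e₂' hA₁ hu₁ hA₂ hu₂
  have h₁ : sE d e₁' = tE d e₁ := Prod.ext hA₁ hu₁
  have h₂ : sE d e₂' = tE d e₂ := Prod.ext hA₂ hu₂
  refine ⟨?_, pairE_compE d e₁ e₁' e₂ e₂' h₁ h₂⟩
  rw [pairE_target, ← h₁, ← h₂]
  rfl

open Omni in
/-- The `𝕍`-valued pairing on the omni-Lie 2-algebra `gl(𝕍) ⊕ 𝕍` is a bilinear functor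
into `𝕍`: it preserves source and target, identity morphisms and vertical composition. -/
theorem pairing_bilinear_functor {V₀ V₁ : Type*} [AddCommGroup V₀] [Module ℝ V₀] [AddCommGroup V₁] [Module ℝ V₁]
    [FiniteDimensional ℝ V₀] [FiniteDimensional ℝ V₁]
    (d : V₁ →ₗ[ℝ] V₀) :
    -- source: s⟨e₁,e₂⟩ = ⟨s e₁, s e₂⟩ = ½(A₀v + B₀u)
    (∀ e₁ e₂ : E d,
      (pairE d e₁ e₂).1 = pairObj d (sE d e₁) (sE d e₂) ∧
      pairObj d (sE d e₁) (sE d e₂)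
        = (2⁻¹ : ℝ) • (e₁.1.1.1.1 e₂.2.1 + e₂.1.1.1.1 e₁.2.1)) ∧
    -- target: t⟨e₁,e₂⟩ = ⟨t e₁, t e₂⟩
    (∀ e₁ e₂ : E d,
      (pairE d e₁ e₂).1 + d (pairE d e₁ e₂).2 = pairObj d (tE d e₁) (tE d e₂)) ∧
    -- identity morphisms go to identity morphisms
    (∀ (A B : End0 d) (u v : V₀),
      pairE d ((A, 0), (u, 0)) ((B, 0), (v, 0)) = (pairObj d (A, u) (B, v), 0)) ∧
    -- vertical composition: composability and functoriality
    (∀ e₁ e₁' e₂ e₂' : E d,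
      e₁'.1.1 = e₁.1.1 + δm d e₁.1.2 → e₁'.2.1 = e₁.2.1 + d e₁.2.2 →
      e₂'.1.1 = e₂.1.1 + δm d e₂.1.2 → e₂'.2.1 = e₂.2.1 + d e₂.2.2 →
      (pairE d e₁ e₂).1 + d (pairE d e₁ e₂).2 = (pairE d e₁' e₂').1 ∧
      pairE d (compE d e₁ e₁') (compE d e₂ e₂')
        = compV (pairE d e₁ e₂) (pairE d e₁' e₂')) :=
  pairing_bilinear_functor_general d
end

section
/- Let L ⊆ E be a subspace that is isotropic (⟨e,e′⟩ = 0 for all e, e′ ∈ L) and closed under the Courant bracket (⟦e,e′⟧ ∈ L for all e, e′ ∈ L). Then the Courant bracket restricted to L satisfies the Jacobi identity: ⟦⟦e₁,e₂⟧,e₃⟧ + ⟦⟦e₂,e₃⟧,e₁⟧ + ⟦⟦e₃,e₁⟧,e₂⟧ = 0 for all e₁, e₂, e₃ ∈ L; hence a Dirac structure of the omni-Lie 2-algebra gl(𝕍) ⊕ 𝕍, with the Courant bracket, is a strict Lie 2-algebra. -/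
open LinearMap

/-!
On an isotropic subspace the Courant bracket coincides with the Dorfman bracket
`⟦e₁, e₂⟧ = ([X₁, X₂], X₁ · ξ₂)`, because isotropy says exactly that `X₁ · ξ₂ = -X₂ · ξ₁`.
The Dorfman bracket satisfies the Leibniz identity on all of `E`: `gl(𝕍)` acts on `𝕍` by a
representation, and this action is faithful, so the bracket of `gl(𝕍)` inherits the
Jacobi identity from commutators of endomorphisms. A skew-symmetric Leibniz bracket is a Lie bracket.
-/

namespace Omni

variable {V₀ V₁ : Type*} [AddCommGroup V₀] [Module ℝ V₀] [AddCommGroup V₁] [Module ℝ V₁]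
  (d : V₁ →ₗ[ℝ] V₀)

lemma act_add_left (X Y : Gl d) (ξ : V₀ × V₁) :
    act d (X + Y) ξ = act d X ξ + act d Y ξ := by
  simp only [act, Prod.ext_iff, Prod.fst_add, Prod.snd_add, Submodule.coe_add,
    LinearMap.add_apply]
  exact ⟨trivial, by abel⟩

lemma act_sub_left (X Y : Gl d) (ξ : V₀ × V₁) :
    act d (X - Y) ξ = act d X ξ - act d Y ξ := by
  simp only [act, Prod.ext_iff, Prod.fst_sub, Prod.snd_sub, Submodule.coe_sub,
    LinearMap.sub_apply]
  exact ⟨trivial, by abel⟩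

lemma act_neg_left (X : Gl d) (ξ : V₀ × V₁) : act d (-X) ξ = -act d X ξ := by
  simpa [act] using act_sub_left d 0 X ξ

lemma act_sub_right (X : Gl d) (ξ η : V₀ × V₁) :
    act d X (ξ - η) = act d X ξ - act d X η := by
  have h : ξ.1 - η.1 + d (ξ.2 - η.2) = (ξ.1 + d ξ.2) - (η.1 + d η.2) := by
    rw [map_sub]; abel
  simp only [act, Prod.ext_iff, Prod.fst_sub, Prod.snd_sub]
  refine ⟨map_sub _ _ _, ?_⟩
  rw [h, map_sub, map_sub]
  abel

lemma act_neg_right (X : Gl d) (ξ : V₀ × V₁) : act d X (-ξ) = -act d X ξ := by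
  simpa [act] using act_sub_right d X 0 ξ

lemma act_bkt (X Y : Gl d) (ξ : V₀ × V₁) :
    act d (bkt d X Y) ξ = act d X (act d Y ξ) - act d Y (act d X ξ) := by
  obtain ⟨⟨⟨X₀, X₁⟩, hX⟩, φ⟩ := X
  obtain ⟨⟨⟨Y₀, Y₁⟩, hY⟩, ψ⟩ := Y
  have hXd (m : V₁) : X₀ (d m) = d (X₁ m) := LinearMap.congr_fun hX m
  have hYd (m : V₁) : Y₀ (d m) = d (Y₁ m) := LinearMap.congr_fun hY m
  simp only [act, bkt, bkt0, bktAφ, bktδ, Prod.mk_sub_mk, Prod.ext_iff, LinearMap.sub_apply,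
    LinearMap.add_apply, LinearMap.comp_apply, map_add, hXd, hYd]
  exact ⟨trivial, by abel⟩

lemma eq_zero_of_act_eq_zero (X : Gl d) (h : ∀ ξ : V₀ × V₁, act d X ξ = 0) : X = 0 := by
  obtain ⟨⟨⟨X₀, X₁⟩, hX⟩, φ⟩ := X
  have h₀ (u : V₀) : X₀ u = 0 ∧ φ u = 0 := by simpa [act, Prod.ext_iff] using h (u, 0)
  have h₁ (m : V₁) : X₁ m = 0 := by
    simpa [act, Prod.ext_iff, (h₀ (d m)).2] using h (0, m)
  refine Prod.ext (Subtype.ext (Prod.ext ?_ ?_)) ?_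
  · ext u; simp [(h₀ u).1]
  · ext m; simp [h₁ m]
  · ext u; simp [(h₀ u).2]

lemma bkt_leibniz (X Y Z : Gl d) :
    bkt d X (bkt d Y Z) = bkt d (bkt d X Y) Z + bkt d Y (bkt d X Z) := by
  rw [← sub_eq_zero]
  refine eq_zero_of_act_eq_zero d _ fun ξ => ?_
  simp only [act_sub_left, act_add_left, act_bkt, act_sub_right]
  abel

lemma bkt_skew (X Y : Gl d) : bkt d Y X = -bkt d X Y := by
  refine Prod.ext (Subtype.ext (Prod.ext ?_ ?_)) ?_ <;>
    simp only [bkt, bkt0, bktAφ, bktδ, Prod.fst_neg, Prod.snd_neg, NegMemClass.coe_neg] <;>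
    abel

lemma bkt_neg_right (X Y : Gl d) : bkt d X (-Y) = -bkt d X Y := by
  refine Prod.ext (Subtype.ext (Prod.ext ?_ ?_)) ?_ <;>
    simp only [bkt, bkt0, bktAφ, bktδ, Prod.fst_neg, Prod.snd_neg, NegMemClass.coe_neg,
      LinearMap.comp_neg, LinearMap.neg_comp] <;>
    abel

lemma dorfman_leibniz (e₁ e₂ e₃ : E d) :
    dorfman d e₁ (dorfman d e₂ e₃)
      = dorfman d (dorfman d e₁ e₂) e₃ + dorfman d e₂ (dorfman d e₁ e₃) := by
  refine Prod.ext (bkt_leibniz d _ _ _) ?_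
  simp only [dorfman, Prod.snd_add, act_bkt]
  abel

lemma courant_skew (e₁ e₂ : E d) : courant d e₂ e₁ = -courant d e₁ e₂ := by
  refine Prod.ext (bkt_skew d _ _) ?_
  simp only [courant, Prod.snd_neg, ← smul_neg, neg_sub]

lemma courant_neg_right (e₁ e₂ : E d) : courant d e₁ (-e₂) = -courant d e₁ e₂ := by
  refine Prod.ext (bkt_neg_right d _ _) ?_
  simp only [courant, Prod.snd_neg, Prod.fst_neg, act_neg_right, act_neg_left, sub_neg_eq_add,
    neg_add_eq_sub, ← smul_neg, neg_sub]

lemma courant_eq_dorfman {e₁ e₂ : E d} (h : pairE d e₁ e₂ = 0) :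
    courant d e₁ e₂ = dorfman d e₁ e₂ := by
  have hanti : act d e₂.1 e₁.2 = -act d e₁.1 e₂.2 :=
    eq_neg_of_add_eq_zero_right (smul_eq_zero.mp h |>.resolve_left (by norm_num))
  refine Prod.ext rfl ?_
  simp only [courant, dorfman, hanti, sub_neg_eq_add, ← two_smul ℝ, smul_smul]
  norm_num

end Omni

open Omni in
theorem dirac_courant_jacobi_general {V₀ V₁ : Type*} [AddCommGroup V₀] [Module ℝ V₀] [AddCommGroup V₁] [Module ℝ V₁]
    (d : V₁ →ₗ[ℝ] V₀)
    (L : Submodule ℝ (E d))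
    (hiso : ∀ e ∈ L, ∀ e' ∈ L, pairE d e e' = 0)
    (hclosed : ∀ e ∈ L, ∀ e' ∈ L, courant d e e' ∈ L) :
    ∀ e₁ ∈ L, ∀ e₂ ∈ L, ∀ e₃ ∈ L,
      courant d (courant d e₁ e₂) e₃ + courant d (courant d e₂ e₃) e₁
        + courant d (courant d e₃ e₁) e₂ = 0 := by
  intro e₁ h₁ e₂ h₂ e₃ h₃
  have hdorf {a b : E d} (ha : a ∈ L) (hb : b ∈ L) : courant d a b = dorfman d a b :=
    courant_eq_dorfman d (hiso a ha b hb)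
  have leibniz := dorfman_leibniz d e₁ e₂ e₃
  rw [← hdorf h₂ h₃, ← hdorf h₁ h₂, ← hdorf h₁ h₃, ← hdorf h₁ (hclosed _ h₂ _ h₃),
    ← hdorf (hclosed _ h₁ _ h₂) h₃, ← hdorf h₂ (hclosed _ h₁ _ h₃)] at leibniz
  rw [courant_skew d e₁ (courant d e₂ e₃), courant_skew d e₂ (courant d e₃ e₁),
    courant_skew d e₁ e₃, courant_neg_right, leibniz]
  abel

open Omni in
/-- On an isotropic subspace closed under the Courant bracket, the Courant bracket satisfies
the Jacobi identity; hence a Dirac structure of the omni-Lie 2-algebra `gl(𝕍) ⊕ 𝕍` is a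
strict Lie 2-algebra. -/
theorem dirac_courant_jacobi {V₀ V₁ : Type*} [AddCommGroup V₀] [Module ℝ V₀] [AddCommGroup V₁] [Module ℝ V₁]
    [FiniteDimensional ℝ V₀] [FiniteDimensional ℝ V₁]
    (d : V₁ →ₗ[ℝ] V₀)
    (L : Submodule ℝ (E d))
    (hiso : ∀ e ∈ L, ∀ e' ∈ L, pairE d e e' = 0)
    (hclosed : ∀ e ∈ L, ∀ e' ∈ L, courant d e e' ∈ L) :
    ∀ e₁ ∈ L, ∀ e₂ ∈ L, ∀ e₃ ∈ L,
      courant d (courant d e₁ e₂) e₃ + courant d (courant d e₂ e₃) e₁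
        + courant d (courant d e₃ e₁) e₂ = 0 :=
  dirac_courant_jacobi_general d L hiso hclosed
end
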